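/- arXiv:2511.15842 — 3 statements merged into one kernel-verified Lean document; each statement's English description precedes it below -/
import Mathlib

section
/- Let F be a field and r, s ∈ F both nonzero with b = r² - s². Then [[1,0],[b,1]] = [[r⁻¹,0],[0,r]] · B · [[r,0],[0,r⁻¹]] · [[s⁻¹,0],[0,s]] · B⁻¹ · [[s,0],[0,s⁻¹]], where B = [[1,0],[1,1]]. -/
theorem stmt_5 (F : Type*) [Field F] (r s b : F) (hr : r ≠ 0) (hs : s ≠ 0)
    (hb : b = r ^ 2 - s ^ 2) :
    (!![1, 0; b, 1] : Matrix (Fin 2) (Fin 2) F) =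
      !![r⁻¹, 0; 0, r] * !![1, 0; 1, 1] * !![r, 0; 0, r⁻¹] *
      !![s⁻¹, 0; 0, s] * (!![1, 0; 1, 1])⁻¹ * !![s, 0; 0, s⁻¹] := by
  have hB : (!![1, 0; 1, 1] : Matrix (Fin 2) (Fin 2) F)⁻¹ = !![1, 0; -1, 1] := by
    apply Matrix.inv_eq_right_inv
    simp [Matrix.mul_fin_two, Matrix.one_fin_two]
  rw [hB]
  ext i j
  fin_cases i <;> fin_cases j <;>
    simp [Matrix.mul_fin_two, hb] <;> field_simp <;> ring
end

section
/- Let p be an odd prime. Every lower unitriangular matrix [[1,0],[b,1]] in SL_2(Z/p) can be written as a product of at most 6 factors, each of which is B, B⁻¹, or a diagonal matrix of determinant 1, where B = [[1,0],[1,1]]. -/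
lemma key_conj {p : ℕ} [Fact p.Prime] (x : ZMod p) (hx : x ≠ 0) :
    !![x⁻¹, 0; 0, x] * (!![(1 : ZMod p), 0; 1, 1] * !![x, 0; 0, x⁻¹]) =
      !![1, 0; x ^ 2, 1] := by
  have h1 : x⁻¹ * x = 1 := inv_mul_cancel₀ hx
  have h2 : x * x⁻¹ = 1 := mul_inv_cancel₀ hx
  simp [Matrix.mul_fin_two, h1, h2]
  ring_nf

theorem stmt_6 (p : ℕ) [Fact p.Prime] (hp : p ≠ 2) (b : ZMod p) :
    ∃ l : List (Matrix (Fin 2) (Fin 2) (ZMod p)),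
      l.length ≤ 6 ∧
      (∀ M ∈ l, M = !![1, 0; 1, 1] ∨ M = (!![1, 0; 1, 1])⁻¹ ∨
        ∃ t : ZMod p, t ≠ 0 ∧ M = !![t, 0; 0, t⁻¹]) ∧
      l.prod = !![1, 0; b, 1] := by
  obtain ⟨x, y, hxy⟩ := ZMod.sq_add_sq p b
  by_cases hx : x = 0
  · by_cases hy : y = 0
    · refine ⟨[], by simp, by simp, ?_⟩
      simp [← hxy, hx, hy, Matrix.one_fin_two]
    · refine ⟨[!![y⁻¹, 0; 0, y], !![1, 0; 1, 1], !![y, 0; 0, y⁻¹]], by simp, ?_, ?_⟩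
      · intro M hM
        simp only [List.mem_cons, List.not_mem_nil, or_false] at hM
        rcases hM with h | h | h
        · exact Or.inr (Or.inr ⟨y⁻¹, inv_ne_zero hy, by simp [h]⟩)
        · exact Or.inl h
        · exact Or.inr (Or.inr ⟨y, hy, h⟩)
      · simp only [List.prod_cons, List.prod_nil, mul_one]
        rw [key_conj y hy, ← hxy, hx]
        ring_nf
  · by_cases hy : y = 0
    · refine ⟨[!![x⁻¹, 0; 0, x], !![1, 0; 1, 1], !![x, 0; 0, x⁻¹]], by simp, ?_, ?_⟩
      · intro M hM
        simp only [List.mem_cons, List.not_mem_nil, or_false] at hM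
        rcases hM with h | h | h
        · exact Or.inr (Or.inr ⟨x⁻¹, inv_ne_zero hx, by simp [h]⟩)
        · exact Or.inl h
        · exact Or.inr (Or.inr ⟨x, hx, h⟩)
      · simp only [List.prod_cons, List.prod_nil, mul_one]
        rw [key_conj x hx, ← hxy, hy]
        ring_nf
    · refine ⟨[!![x⁻¹, 0; 0, x], !![1, 0; 1, 1], !![x, 0; 0, x⁻¹],
        !![y⁻¹, 0; 0, y], !![1, 0; 1, 1], !![y, 0; 0, y⁻¹]], by simp, ?_, ?_⟩
      · intro M hM
        simp only [List.mem_cons, List.not_mem_nil, or_false] at hM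
        rcases hM with h | h | h | h | h | h
        · exact Or.inr (Or.inr ⟨x⁻¹, inv_ne_zero hx, by simp [h]⟩)
        · exact Or.inl h
        · exact Or.inr (Or.inr ⟨x, hx, h⟩)
        · exact Or.inr (Or.inr ⟨y⁻¹, inv_ne_zero hy, by simp [h]⟩)
        · exact Or.inl h
        · exact Or.inr (Or.inr ⟨y, hy, h⟩)
      · simp only [List.prod_cons, List.prod_nil, mul_one]
        rw [key_conj y hy, ← hxy]
        have h1 := mul_inv_cancel₀ hx
        have h2 := inv_mul_cancel₀ hx
        simp only [← mul_assoc]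
        simp [Matrix.mul_fin_two, h1, h2]
        ring_nf
end

section
/- Every matrix in SL_2(Z) with all four entries strictly positive is a product of nonnegative powers of A = [[1,1],[0,1]] and B = [[1,0],[1,1]], i.e., lies in the monoid generated by A and B. -/
open Matrix

private lemma aux_sl2 : ∀ n : ℕ, ∀ a b c d : ℤ, 0 ≤ a → 0 ≤ b → 0 ≤ c → 0 ≤ d →
    a * d - b * c = 1 → a + b + c + d ≤ (n : ℤ) →
    (!![a, b; c, d] : Matrix (Fin 2) (Fin 2) ℤ) ∈
      Submonoid.closure {!![1, 1; 0, 1], !![1, 0; 1, 1]} := by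
  intro n
  induction n with
  | zero =>
    intro a b c d ha hb hc hd hdet hn
    have h : a = 0 ∧ b = 0 ∧ c = 0 ∧ d = 0 := by
      constructor
      · omega
      · constructor
        · omega
        · constructor <;> omega
    obtain ⟨rfl, rfl, rfl, rfl⟩ := h
    simp at hdet
  | succ n ih =>
    intro a b c d ha hb hc hd hdet hn
    have hA : (!![1,1;0,1] : Matrix (Fin 2) (Fin 2) ℤ) ∈
        Submonoid.closure {!![1, 1; 0, 1], !![1, 0; 1, 1]} :=
      Submonoid.subset_closure (Or.inl rfl)
    have hB : (!![1,0;1,1] : Matrix (Fin 2) (Fin 2) ℤ) ∈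
        Submonoid.closure {!![1, 1; 0, 1], !![1, 0; 1, 1]} :=
      Submonoid.subset_closure (Or.inr rfl)
    have ha1 : 1 ≤ a := by nlinarith
    have hd1 : 1 ≤ d := by nlinarith
    by_cases hid : b = 0 ∧ c = 0
    · obtain ⟨rfl, rfl⟩ := hid
      have h1 : a = 1 := by nlinarith
      have h2 : d = 1 := by nlinarith
      subst h1; subst h2
      have hone : (!![(1:ℤ),0;0,1] : Matrix (Fin 2) (Fin 2) ℤ) = 1 := by
        rw [Matrix.one_fin_two]
      rw [hone]
      exact Submonoid.one_mem _
    · by_cases h1 : c ≤ a ∧ d ≤ b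
      · obtain ⟨h1a, h1b⟩ := h1
        have key : (!![a, b; c, d] : Matrix (Fin 2) (Fin 2) ℤ)
            = !![1,1;0,1] * !![a-c, b-d; c, d] := by
          ext i j
          fin_cases i <;> fin_cases j <;>
            simp [Matrix.mul_apply, Fin.sum_univ_two] <;> ring
        rw [key]
        exact Submonoid.mul_mem _ hA
          (ih (a-c) (b-d) c d (by linarith) (by linarith) hc hd
            (by linear_combination hdet) (by omega))
      · by_cases h2 : a ≤ c ∧ b ≤ d
        · obtain ⟨h2a, h2b⟩ := h2
          have key : (!![a, b; c, d] : Matrix (Fin 2) (Fin 2) ℤ)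
              = !![1,0;1,1] * !![a, b; c-a, d-b] := by
            ext i j
            fin_cases i <;> fin_cases j <;>
              simp [Matrix.mul_apply, Fin.sum_univ_two] <;> ring
          rw [key]
          exact Submonoid.mul_mem _ hB
            (ih a b (c-a) (d-b) ha hb (by linarith) (by linarith)
              (by linear_combination hdet) (by omega))
        · exfalso
          push_neg at h1 h2
          rcases lt_trichotomy a c with h | h | h
          · have hdb : d < b := h2 (le_of_lt h)
            nlinarith
          · have hbd : b < d := h1 (le_of_eq h.symm)
            have hdb : d < b := h2 (le_of_eq h)
            omega
          · have hbd : b < d := h1 (le_of_lt h)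
            have : b + c + 1 ≤ 1 := by nlinarith
            exact hid ⟨by omega, by omega⟩

theorem stmt_10 (a b c d : ℤ) (ha : 0 < a) (hb : 0 < b) (hc : 0 < c) (hd : 0 < d)
    (hdet : a * d - b * c = 1) :
    (!![a, b; c, d] : Matrix (Fin 2) (Fin 2) ℤ) ∈
      Submonoid.closure {!![1, 1; 0, 1], !![1, 0; 1, 1]} := by
  exact aux_sl2 (a+b+c+d).toNat a b c d ha.le hb.le hc.le hd.le hdet (by omega)
end
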